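/- arXiv:1603.04067 — 2 statements merged into one kernel-verified Lean document; each statement's English description precedes it below -/
import Mathlib

section
/- Let n ≥ 1 and k ∈ {1,…,n}, and let b = ⌈√n⌉ + 1. If k ≤ ⌈√n⌉ then k(k+1)/2 ≤ 3k²/2, and if k ≥ ⌈√n⌉ + 1 then n + ⌈√n⌉(⌈√n⌉+1)/2 ≤ 3k²/2. Hence all names returned by the algorithm lie in {1,…,⌊3k²/2⌋}. -/
theorem sqrt_param_name_range (n k : ℕ) (hn : 1 ≤ n) (hk : k ∈ Finset.Icc 1 n) :
    (k ≤ ⌈Real.sqrt n⌉₊ → k * (k + 1) / 2 ≤ 3 * k ^ 2 / 2) ∧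
    (⌈Real.sqrt n⌉₊ + 1 ≤ k →
      n + ⌈Real.sqrt n⌉₊ * (⌈Real.sqrt n⌉₊ + 1) / 2 ≤ 3 * k ^ 2 / 2) := by
  simp only [Finset.mem_Icc] at hk
  obtain ⟨hk1, hkn⟩ := hk
  set s := ⌈Real.sqrt n⌉₊ with hs
  have hns : n ≤ s ^ 2 := by
    have h1 : Real.sqrt n ≤ (s : ℝ) := Nat.le_ceil _
    have h2 : (n : ℝ) ≤ (s : ℝ) ^ 2 := by
      have := Real.sq_sqrt (by positivity : (0:ℝ) ≤ (n:ℝ))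
      nlinarith [Real.sqrt_nonneg (n:ℝ)]
    exact_mod_cast h2
  constructor
  · intro _
    apply Nat.div_le_div_right
    nlinarith
  · intro hsk
    have heven : 2 * (s * (s + 1) / 2) = s * (s + 1) := by
      rw [Nat.mul_div_cancel' (Nat.even_mul_succ_self s).two_dvd]
    rw [Nat.le_div_iff_mul_le (by norm_num : 0 < 2)]
    have : 2 * n + s * (s + 1) ≤ 3 * k ^ 2 := by nlinarith
    omega
end

section
/- For any integer b ≥ 2: ∑_{k=0}^{b−1} (bk + 1 + b·((b−1)(bk+1)/(b−k) + 1)) < 3b⁴ ln b, where the inner division is over the rationals/reals. -/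
/-!
Each summand is at most `b⁴/(b - k) + 1`, so the sum is at most
`b⁴ H_b + b ≤ b⁴ (1 + log b) + b`; this is below `3 b⁴ log b` since `log b ≥ log 2 > 0.69`.
-/

open Finset Real

lemma summand_le_pow_four_div_add_one {b k : ℝ} (hb : 1 ≤ b) (hkb : k + 1 ≤ b) :
    b * k + 1 + b * ((b - 1) * (b * k + 1) / (b - k) + 1) ≤ b ^ 4 / (b - k) + 1 := by
  have hj : 0 < b - k := by linarith
  have slack : b ^ 4 / (b - k) + 1 - (b * k + 1 + b * ((b - 1) * (b * k + 1) / (b - k) + 1))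
      = b * (k ^ 2 + (b - 1) * ((b + 1) * (b - k) - 1)) / (b - k) := by
    field_simp
    ring
  have : 0 ≤ (b - 1) * ((b + 1) * (b - k) - 1) := mul_nonneg (by linarith) (by nlinarith)
  have : 0 ≤ b * (k ^ 2 + (b - 1) * ((b + 1) * (b - k) - 1)) / (b - k) := by positivity
  linarith

lemma sum_range_inv_sub_eq_harmonic (n : ℕ) :
    ∑ k ∈ range n, ((n : ℝ) - k)⁻¹ = harmonic n := by
  rw [harmonic, Rat.cast_sum, ← sum_range_reflect]
  refine sum_congr rfl fun k hk => ?_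
  have hk : k < n := mem_range.1 hk
  rw [Rat.cast_inv, Nat.cast_sub (by omega), Nat.cast_sub (by omega)]
  push_cast
  ring_nf

lemma pow_four_mul_one_add_log_add_lt {b : ℝ} (hb : 2 ≤ b) :
    b ^ 4 * (1 + log b) + b < 3 * b ^ 4 * log b := by
  have hlog : 0.6931471803 < log b := log_two_gt_d9.trans_le (log_le_log two_pos hb)
  nlinarith [pow_le_pow_left₀ two_pos.le hb 3,
    mul_le_mul_of_nonneg_left hlog.le (by positivity : 0 ≤ b ^ 4)]

open Real in
theorem total_writes_bound (b : ℕ) (hb : 2 ≤ b) :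
    ∑ k ∈ Finset.range b,
      ((b : ℝ) * k + 1 + b * ((b - 1) * (b * k + 1) / (b - k) + 1))
      < 3 * (b : ℝ) ^ 4 * Real.log b := by
  have hb' : (2 : ℝ) ≤ b := by exact_mod_cast hb
  calc _ ≤ ∑ k ∈ range b, ((b : ℝ) ^ 4 / (b - k) + 1) :=
        sum_le_sum fun k hk => summand_le_pow_four_div_add_one (by linarith) (by
          exact_mod_cast mem_range.1 hk)
    _ = b ^ 4 * (harmonic b : ℝ) + b := by
        simp only [sum_add_distrib, div_eq_mul_inv, ← mul_sum, sum_range_inv_sub_eq_harmonic]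
        simp
    _ ≤ b ^ 4 * (1 + log b) + b := by
        gcongr
        exact harmonic_le_one_add_log b
    _ < 3 * b ^ 4 * log b := pow_four_mul_one_add_log_add_lt hb'
end
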